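/- Let n be even, k ≥ 1, and let K ⊆ F_{2^n} be the subfield with 2^{n/2} elements and ω ∈ F_{2^n} \ K, so that every x ∈ F_{2^n} is uniquely written as x = y′ + ω y with y, y′ ∈ K. Let g_j : K → F_2 for 0 ≤ j ≤ k−1 be Boolean functions with g_j(0) = 0 for all j and Σ_{t ∈ K} ζ^{Σ_{j=0}^{k−1} 2^j g_j(t)} = 0, where ζ = e^{2πi/2^k}. Then the function f : F_{2^n} → Z_{2^k} defined by f(y′ + ω y) = Σ_{j=0}^{k−1} 2^j g_j(y′/y) (with the convention y′/y = 0 if y = 0) is g-hyperbent. -/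

import Mathlib

open scoped BigOperators

/-- `zeta q = e^{2πi/q}`, a primitive `q`-th root of unity. -/
noncomputable def zeta (q : ℕ) : ℂ := Complex.exp (2 * Real.pi * Complex.I / (q : ℂ))

noncomputable instance (n : ℕ) : Fintype (GaloisField 2 n) := Fintype.ofFinite _

/-- The extended generalized Walsh-Hadamard transform `H_{f,i}(u)` of `f : F_{2^n} → Z_q`. -/
noncomputable def egwht (n q : ℕ) (f : GaloisField 2 n → ZMod q) (i : ℕ) (u : GaloisField 2 n) : ℂ :=
  ∑ x : GaloisField 2 n, zeta q ^ (f x).val *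
    (-1 : ℂ) ^ (Algebra.trace (ZMod 2) (GaloisField 2 n) (u * x ^ i)).val

/-- `f : F_{2^n} → Z_q` is g-hyperbent if `|H_{f,i}(u)| = 2^{n/2}` for all `i` coprime to
`2^n - 1` and all `u`. -/
def IsGHyperbent (n q : ℕ) (f : GaloisField 2 n → ZMod q) : Prop :=
  ∀ i : ℕ, Nat.Coprime i (2 ^ n - 1) → ∀ u, ‖egwht n q f i u‖ = Real.sqrt 2 ^ n

/-- The extended Walsh-Hadamard transform `W_{g,i}(u)` of a Boolean function on `F_{2^n}`. -/
noncomputable def bwhtExt (n : ℕ) (g : GaloisField 2 n → ZMod 2) (i : ℕ) (u : GaloisField 2 n) : ℂ :=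
  ∑ x : GaloisField 2 n, (-1 : ℂ) ^ (g x + Algebra.trace (ZMod 2) (GaloisField 2 n) (u * x ^ i)).val

/-- A Boolean function on `F_{2^n}` is hyperbent if `|W_{g,i}(u)| = 2^{n/2}` for all `i`
coprime to `2^n - 1` and all `u`. -/
def IsHyperbent (n : ℕ) (g : GaloisField 2 n → ZMod 2) : Prop :=
  ∀ i : ℕ, Nat.Coprime i (2 ^ n - 1) → ∀ u, ‖bwhtExt n g i u‖ = Real.sqrt 2 ^ n

/-!
Write `L = F_{2^{2m}}` and `χ x = (-1) ^ Tr x`. Every `x ∉ K` lies on exactly one of the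
lines `(t + ω) K^×`, `t ∈ K`, on which `f` is constant. Splitting `H_{f,i}(u)` along `K` and
these lines, and substituting `y ↦ y ^ i` (a bijection of `K`), expresses it through the sums
`Σ_{z ∈ K} χ (v z)`, which are `|K|` for `v ∈ K` and `0` otherwise: `K` is its own trace dual
because `[L : K] = 2` is even. Since `f` is balanced on `ω + K`, this gives
`H_{f,i}(u) = |K| [u ∈ K] + |K| Σ_t ζ^{f (t + ω)} [u (t + ω)^i ∈ K]`. For `u = 0` the sum
vanishes by balancedness, for `u ∈ K^×` none of its terms survives, and for `u ∉ K` exactly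
one does; in each case `|H_{f,i}(u)| = |K| = 2^m`.
-/

open Finset Function

section TraceChar

variable (L : Type*) [Field L] [Algebra (ZMod 2) L]

noncomputable def traceChar : AddChar L ℂ :=
  (AddChar.zmodChar 2 (neg_one_sq : (-1 : ℂ) ^ 2 = 1)).compAddMonoidHom
    (Algebra.trace (ZMod 2) L).toAddMonoidHom

variable {L}

lemma traceChar_apply (x : L) : traceChar L x = (-1) ^ (Algebra.trace (ZMod 2) L x).val := rfl

lemma traceChar_eq_one_iff {x : L} : traceChar L x = 1 ↔ Algebra.trace (ZMod 2) L x = 0 := by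
  rw [traceChar_apply]
  generalize Algebra.trace (ZMod 2) L x = a
  obtain rfl | rfl : a = 0 ∨ a = 1 := by revert a; decide
  · simp
  · norm_num [ZMod.val_one]

end TraceChar

section Subfield

variable {L : Type*} [Field L] {K : Subfield L} {ω : L}

lemma add_mul_injective (hω : ω ∉ K) : Injective fun p : K × K => (p.1 : L) + ω * p.2 := by
  rintro ⟨a, b⟩ ⟨c, d⟩ h
  by_contra hne
  have hbd : (b : L) - d ≠ 0 := by
    rintro hbd
    exact hne (by simp_all [sub_eq_zero])
  exact hω (by
    rw [show ω = ((c - a) / (b - d) : K) by push_cast; field_simp; linear_combination h]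
    exact SetLike.coe_mem _)

lemma exists_eq_add_mul_of_notMem (hcover : ∀ x : L, ∃ y' y : K, x = y' + ω * y) {v : L}
    (hv : v ∉ K) (x : L) : ∃ a b : K, x = a + v * b := by
  obtain ⟨a, b, rfl⟩ := hcover v
  have hb : (b : L) ≠ 0 := fun hb => hv (by simp [hb])
  obtain ⟨y', y, rfl⟩ := hcover x
  exact ⟨y' - a * y / b, y / b, by push_cast; field_simp; ring⟩

lemma existsUnique_mul_add_mem (hcover : ∀ x : L, ∃ y' y : K, x = y' + ω * y)
    {w : L} (hw : w ∉ K) : ∃! t : K, w * (t + ω) ∈ K := by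
  have hw0 : w ≠ 0 := fun h => hw (h ▸ K.zero_mem)
  obtain ⟨a, b, hab⟩ := hcover w⁻¹
  have hb : (b : L) ≠ 0 := fun hb =>
    hw (by simpa using K.inv_mem (by simp [hab, hb] : w⁻¹ ∈ K))
  have hmem : w * ((a / b : K) + ω) ∈ K := by
    have : w * ((a / b : K) + ω) = (b⁻¹ : K) := by
      push_cast
      rw [div_add' _ _ _ hb, ← hab, mul_div_assoc', mul_inv_cancel₀ hw0, one_div]
    exact this ▸ SetLike.coe_mem _
  refine ⟨a / b, hmem, fun t ht => ?_⟩
  by_contra hne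
  have hsub : (t : L) - (a / b : K) ≠ 0 := sub_ne_zero.mpr fun h => hne (Subtype.ext h)
  have : w = (w * (t + ω) - w * ((a / b : K) + ω)) / (t - (a / b : K)) := by
    field_simp
    ring
  exact hw (this ▸ K.div_mem (K.sub_mem ht hmem) (K.sub_mem t.2 (a / b).2))

end Subfield

section Power

variable {L : Type*} [Field L] {i : ℕ}

lemma pow_bijective_of_coprime [Fintype L] (hi0 : i ≠ 0) (hi : i.Coprime (Fintype.card L - 1)) :
    Bijective fun x : L => x ^ i := by
  have hunits : (Nat.card Lˣ).Coprime i := by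
    rwa [Nat.card_units, Nat.card_eq_fintype_card, Nat.coprime_comm]
  have hsurj : Surjective fun x : L => x ^ i := by
    intro y
    rcases eq_or_ne y 0 with rfl | hy
    · exact ⟨0, zero_pow hi0⟩
    obtain ⟨x, hx⟩ := (Nat.Coprime.pow_left_bijective hunits).surjective (Units.mk0 y hy)
    exact ⟨x, by simpa using congrArg Units.val hx⟩
  exact ⟨Finite.injective_iff_surjective.mpr hsurj, hsurj⟩

lemma Subfield.pow_bijective (K : Subfield L) [Finite K] (hinj : Injective fun x : L => x ^ i) :
    Bijective fun y : K => y ^ i :=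
  Finite.injective_iff_bijective.mp fun y z h =>
    Subtype.ext (hinj (by simpa using congrArg Subtype.val h))

lemma Subfield.pow_mem_iff (K : Subfield L) [Finite K] (hinj : Injective fun x : L => x ^ i)
    {x : L} : x ^ i ∈ K ↔ x ∈ K := by
  refine ⟨fun hx => ?_, fun hx => pow_mem hx i⟩
  obtain ⟨y, hy⟩ := (K.pow_bijective hinj).surjective ⟨x ^ i, hx⟩
  rw [← hinj (congrArg Subtype.val hy)]
  exact y.2

variable {K : Subfield L} {ω : L}

lemma mul_pow_add_notMem [Finite K] (hω : ω ∉ K) (hinj : Injective fun x : L => x ^ i) {u : L}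
    (hu0 : u ≠ 0) (hu : u ∈ K) (t : K) : u * (t + ω) ^ i ∉ K := by
  intro h
  have : ((t : L) + ω) ^ i ∈ K := by simpa [hu0] using K.mul_mem (K.inv_mem hu) h
  exact hω (by simpa using K.sub_mem ((K.pow_mem_iff hinj).mp this) t.2)

lemma existsUnique_mul_pow_add_mem [Finite K] (hcover : ∀ x : L, ∃ y' y : K, x = y' + ω * y)
    (hpow : Bijective fun x : L => x ^ i) {u : L} (hu : u ∉ K) :
    ∃! t : K, u * (t + ω) ^ i ∈ K := by
  obtain ⟨w, rfl⟩ := hpow.surjective u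
  simp_rw [← mul_pow, K.pow_mem_iff hpow.injective]
  exact existsUnique_mul_add_mem hcover fun hw => hu (pow_mem hw i)

lemma norm_ite_add_sum_mul_ite [Fintype K] [DecidablePred (· ∈ K)] (hω : ω ∉ K)
    (hcover : ∀ x : L, ∃ y' y : K, x = y' + ω * y) (hpow : Bijective fun x : L => x ^ i)
    (c : K → ℂ) (hc : ∀ t, ‖c t‖ = 1) (hc_sum : ∑ t, c t = 0) (N : ℂ) (u : L) :
    ‖(if u ∈ K then N else 0) + ∑ t : K, c t * if u * (t + ω) ^ i ∈ K then N else 0‖ = ‖N‖ := by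
  rcases eq_or_ne u 0 with rfl | hu0
  · simp [← sum_mul, hc_sum]
  by_cases hu : u ∈ K
  · simp [hu, mul_pow_add_notMem hω hpow.injective hu0 hu]
  obtain ⟨t₀, ht₀, huniq⟩ := existsUnique_mul_pow_add_mem hcover hpow hu
  rw [if_neg hu, zero_add, sum_eq_single t₀ (fun t _ ht => by rw [if_neg (mt (huniq t) ht),
    mul_zero]) (by simp), if_pos ht₀, norm_mul, hc, one_mul]

end Power

section Trace

variable {L : Type*} [Field L] [Fintype L] [Algebra (ZMod 2) L] {K : Subfield L} [Fintype K]
  {m : ℕ}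

lemma trace_eq_zero_of_mem (hL : Module.finrank (ZMod 2) L = 2 * m)
    (hK : Fintype.card K = 2 ^ m) {w : L} (hw : w ∈ K) : Algebra.trace (ZMod 2) L w = 0 := by
  have hfrob : w ^ 2 ^ m = w := by
    simpa [hK] using congrArg Subtype.val (FiniteField.pow_card (⟨w, hw⟩ : K))
  have htwo : (2 : L) = 0 := by
    rw [← map_ofNat (algebraMap (ZMod 2) L) 2]
    exact (map_eq_zero _).mpr rfl
  apply (algebraMap (ZMod 2) L).injective
  rw [FiniteField.algebraMap_trace_eq_sum_pow, hL, two_mul, Finset.sum_range_add, map_zero,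
    Nat.card_zmod]
  simp only [pow_add, pow_mul, hfrob, ← two_mul, htwo, zero_mul]

variable {ω : L}

lemma exists_trace_mul_ne_zero (hL : Module.finrank (ZMod 2) L = 2 * m)
    (hK : Fintype.card K = 2 ^ m) (hcover : ∀ x : L, ∃ y' y : K, x = y' + ω * y) {v : L}
    (hv : v ∉ K) : ∃ z : K, Algebra.trace (ZMod 2) L (v * z) ≠ 0 := by
  obtain ⟨x, hx⟩ : ∃ x : L, Algebra.trace (ZMod 2) L x ≠ 0 := by
    by_contra! h
    exact Algebra.trace_ne_zero (ZMod 2) L (LinearMap.ext h)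
  obtain ⟨a, b, rfl⟩ := exists_eq_add_mul_of_notMem hcover hv x
  refine ⟨b, ?_⟩
  rwa [map_add, trace_eq_zero_of_mem hL hK a.2, zero_add] at hx

lemma sum_traceChar_mul [DecidablePred (· ∈ K)] (hL : Module.finrank (ZMod 2) L = 2 * m)
    (hK : Fintype.card K = 2 ^ m) (hcover : ∀ x : L, ∃ y' y : K, x = y' + ω * y) (v : L) :
    ∑ z : K, traceChar L (v * z) = if v ∈ K then (Fintype.card K : ℂ) else 0 := by
  split_ifs with hv
  · have hone (z : K) : traceChar L (v * z) = 1 :=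
      traceChar_eq_one_iff.mpr (trace_eq_zero_of_mem hL hK (K.mul_mem hv z.2))
    simp [hone]
  · obtain ⟨z, hz⟩ := exists_trace_mul_ne_zero hL hK hcover hv
    let ψ : AddChar K ℂ := (traceChar L).compAddMonoidHom
      ((AddMonoidHom.mulLeft v).comp K.subtype.toAddMonoidHom)
    refine (AddChar.sum_eq_zero_iff_ne_zero (ψ := ψ)).mpr fun h => hz ?_
    exact traceChar_eq_one_iff.mp (by simpa [ψ] using DFunLike.congr_fun h z)

lemma sum_traceChar_mul_pow [DecidablePred (· ∈ K)] (hL : Module.finrank (ZMod 2) L = 2 * m)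
    (hK : Fintype.card K = 2 ^ m) (hcover : ∀ x : L, ∃ y' y : K, x = y' + ω * y) {i : ℕ}
    (hinj : Injective fun x : L => x ^ i) (v : L) :
    ∑ z : K, traceChar L (v * z ^ i) = if v ∈ K then (Fintype.card K : ℂ) else 0 := by
  rw [← sum_traceChar_mul hL hK hcover]
  exact (K.pow_bijective hinj).sum_comp fun z : K => traceChar L (v * z)

end Trace

section Lines

variable {L : Type*} [Field L] [Fintype L] [DecidableEq L] {K : Subfield L} [Fintype K] {ω : L}

lemma sum_eq_sum_subfield_add_sum_lines {M : Type*} [AddCommMonoid M]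
    (hω : ω ∉ K) (hcover : ∀ x : L, ∃ y' y : K, x = y' + ω * y) (G : L → M) :
    ∑ x, G x = ∑ y : K, G y + ∑ t : K, ∑ y ∈ univ.erase (0 : K), G ((t + ω) * y) := by
  have hbij : Bijective fun p : K × K => (p.1 : L) + ω * p.2 :=
    ⟨add_mul_injective hω, fun x => by obtain ⟨a, b, h⟩ := hcover x; exact ⟨(a, b), h.symm⟩⟩
  rw [← hbij.sum_comp G, Fintype.sum_prod_type_right, ← Finset.add_sum_erase _ _ (mem_univ 0),
    Finset.sum_comm (s := univ)]
  congr 1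
  · simp
  · refine Finset.sum_congr rfl fun y hy => ?_
    refine (Fintype.sum_equiv (Equiv.mulRight₀ y (ne_of_mem_erase hy)) _ _ fun t => ?_).symm
    simp only [Equiv.mulRight₀_apply, Subfield.coe_mul, add_mul]

end Lines

section Transform

variable {L : Type*} [Field L] [Fintype L] [DecidableEq L] [Algebra (ZMod 2) L]
  {K : Subfield L} [Fintype K] [DecidablePred (· ∈ K)] {m i : ℕ} {ω : L}

lemma sum_mul_traceChar_mul_pow_eq (hL : Module.finrank (ZMod 2) L = 2 * m)
    (hK : Fintype.card K = 2 ^ m) (hω : ω ∉ K) (hcover : ∀ x : L, ∃ y' y : K, x = y' + ω * y)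
    (hi0 : i ≠ 0) (hinj : Injective fun x : L => x ^ i) (w : L → ℂ) (hwK : ∀ y : K, w y = 1)
    (hw_mul : ∀ y : K, y ≠ 0 → ∀ x, w (y * x) = w x) (hw_sum : ∑ t : K, w (t + ω) = 0)
    (u : L) :
    ∑ x, w x * traceChar L (u * x ^ i) =
      (if u ∈ K then (Fintype.card K : ℂ) else 0) +
        ∑ t : K, w (t + ω) * if u * (t + ω) ^ i ∈ K then (Fintype.card K : ℂ) else 0 := by
  have hline (t : K) :
      ∑ y ∈ univ.erase (0 : K), w ((t + ω) * y) * traceChar L (u * ((t + ω) * y) ^ i) =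
        w (t + ω) * ((if u * (t + ω) ^ i ∈ K then (Fintype.card K : ℂ) else 0) - 1) := by
    rw [← sum_traceChar_mul_pow hL hK hcover hinj, ← sum_erase_add _ _ (mem_univ 0),
      ZeroMemClass.coe_zero, zero_pow hi0, mul_zero, AddChar.map_zero_eq_one,
      add_sub_cancel_right, mul_sum]
    refine sum_congr rfl fun y hy => ?_
    rw [mul_comm _ (y : L), hw_mul y (ne_of_mem_erase hy), mul_pow, mul_comm (_ ^ i), mul_assoc]
  rw [sum_eq_sum_subfield_add_sum_lines hω hcover, sum_congr rfl fun t _ => hline t]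
  simp only [hwK, one_mul, sum_traceChar_mul_pow hL hK hcover hinj, mul_sub, mul_one,
    sum_sub_distrib, hw_sum, sub_zero]

end Transform

lemma egwht_eq_sum_traceChar (n q : ℕ) (f : GaloisField 2 n → ZMod q) (i : ℕ)
    (u : GaloisField 2 n) :
    egwht n q f i u = ∑ x, zeta q ^ (f x).val * traceChar _ (u * x ^ i) :=
  rfl

lemma zeta_isPrimitiveRoot {q : ℕ} (hq : q ≠ 0) : IsPrimitiveRoot (zeta q) q :=
  Complex.isPrimitiveRoot_exp q hq

lemma zeta_pow_val_natCast {q : ℕ} (hq : q ≠ 0) (n : ℕ) :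
    zeta q ^ (n : ZMod q).val = zeta q ^ n := by
  rw [ZMod.val_natCast, ← pow_eq_pow_mod n (zeta_isPrimitiveRoot hq).pow_eq_one]

theorem isGHyperbent_of_subfield_mul_invariant {m q : ℕ} (hm : m ≠ 0) (hq : q ≠ 0)
    (K : Subfield (GaloisField 2 (2 * m))) [Fintype K] (hK : Fintype.card K = 2 ^ m)
    {ω : GaloisField 2 (2 * m)} (hω : ω ∉ K)
    (hcover : ∀ x : GaloisField 2 (2 * m), ∃ y' y : K, x = y' + ω * y)
    (f : GaloisField 2 (2 * m) → ZMod q) (hfK : ∀ y : K, f y = 0)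
    (hf_mul : ∀ y : K, y ≠ 0 → ∀ x, f (y * x) = f x)
    (hf_sum : ∑ t : K, zeta q ^ (f (t + ω)).val = 0) :
    IsGHyperbent (2 * m) q f := by
  classical
  intro i hi u
  have hcard : Fintype.card (GaloisField 2 (2 * m)) = 2 ^ (2 * m) := by
    rw [Fintype.card_eq_nat_card, GaloisField.card 2 _ (by omega)]
  have hi0 : i ≠ 0 := by
    rintro rfl
    have : 2 ^ 2 ≤ 2 ^ (2 * m) := Nat.pow_le_pow_right two_pos (by omega)
    simp only [Nat.coprime_zero_left] at hi
    omega
  have hpow := pow_bijective_of_coprime hi0 (hcard ▸ hi)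
  have hζ : ‖zeta q‖ = 1 := (zeta_isPrimitiveRoot hq).norm'_eq_one hq
  rw [egwht_eq_sum_traceChar, sum_mul_traceChar_mul_pow_eq (GaloisField.finrank 2 (by omega)) hK
    hω hcover hi0 hpow.injective _ (by simp [hfK]) (fun y hy x => by simp [hf_mul y hy]) hf_sum,
    norm_ite_add_sum_mul_ite hω hcover hpow _ (fun t => by simp [hζ]) hf_sum, hK]
  simp [pow_mul]

theorem statement_7_general (m k : ℕ) (hm : 1 ≤ m)
    (K : Subfield (GaloisField 2 (2 * m))) [Fintype ↥K]
    (hK : Fintype.card ↥K = 2 ^ m)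
    (ω : GaloisField 2 (2 * m)) (hω : ω ∉ K)
    (hcover : ∀ x : GaloisField 2 (2 * m), ∃ y' y : ↥K, x = (y' : GaloisField 2 (2 * m)) + ω * y)
    (g : ℕ → ↥K → ZMod 2)
    (hg0 : ∀ j < k, g j 0 = 0)
    (hsum : ∑ t : ↥K, zeta (2 ^ k) ^ (∑ j ∈ Finset.range k, 2 ^ j * (g j t).val) = 0)
    (f : GaloisField 2 (2 * m) → ZMod (2 ^ k))
    (hf : ∀ y' y : ↥K, f ((y' : GaloisField 2 (2 * m)) + ω * y) =
      ∑ j ∈ Finset.range k, (2 ^ j : ZMod (2 ^ k)) * ((g j (y' / y)).val : ZMod (2 ^ k))) :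
    IsGHyperbent (2 * m) (2 ^ k) f := by
  refine isGHyperbent_of_subfield_mul_invariant (by omega) (by positivity) K hK hω hcover f
    (fun y => ?_) (fun y hy x => ?_) ?_
  · have hy := hf y 0
    rw [ZeroMemClass.coe_zero, mul_zero, add_zero, div_zero] at hy
    rw [hy]
    exact Finset.sum_eq_zero fun j hj => by rw [hg0 j (Finset.mem_range.mp hj), ZMod.val_zero,
      Nat.cast_zero, mul_zero]
  · obtain ⟨a, b, rfl⟩ := hcover x
    have : (y : GaloisField 2 (2 * m)) * (a + ω * b) = (y * a : K) + ω * (y * b : K) := by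
      push_cast
      ring
    rw [this, hf, hf, mul_div_mul_left _ _ hy]
  · refine Eq.trans (Finset.sum_congr rfl fun t _ => ?_) hsum
    rw [← zeta_pow_val_natCast (by positivity) (∑ j ∈ Finset.range k, 2 ^ j * (g j t).val)]
    congr 2
    simpa using hf t 1

theorem statement_7 (m k : ℕ) (hm : 1 ≤ m) (hk : 1 ≤ k)
    (K : Subfield (GaloisField 2 (2 * m))) [Fintype ↥K]
    (hK : Fintype.card ↥K = 2 ^ m)
    (ω : GaloisField 2 (2 * m)) (hω : ω ∉ K)
    (hcover : ∀ x : GaloisField 2 (2 * m), ∃ y' y : ↥K, x = (y' : GaloisField 2 (2 * m)) + ω * y)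
    (g : ℕ → ↥K → ZMod 2)
    (hg0 : ∀ j < k, g j 0 = 0)
    (hsum : ∑ t : ↥K, zeta (2 ^ k) ^ (∑ j ∈ Finset.range k, 2 ^ j * (g j t).val) = 0)
    (f : GaloisField 2 (2 * m) → ZMod (2 ^ k))
    (hf : ∀ y' y : ↥K, f ((y' : GaloisField 2 (2 * m)) + ω * y) =
      ∑ j ∈ Finset.range k, (2 ^ j : ZMod (2 ^ k)) * ((g j (y' / y)).val : ZMod (2 ^ k))) :
    IsGHyperbent (2 * m) (2 ^ k) f :=
  statement_7_general m k hm K hK ω hω hcover g hg0 hsum f hf
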